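/- arXiv:1602.05454 — 2 statements merged into one kernel-verified Lean document; each statement's English description precedes it below -/
import Mathlib

section
/- For ω₂(x) = (1-x)²/(1-(1-x)²) on (0,1], the function x·ω₂'(x) is increasing in x ∈ (0,1]. -/
/-!
Since `1 - (1 - x)² = x (2 - x)`, one computes `x ω₂'(x) = -2 (1 - x) / (x (2 - x)²)`, so it suffices
that `g x = (1 - x) / (x (2 - x)²)` is antitone on `(0, 2)`. Cross-multiplying, for `x ≤ y`,
`(1 - x) y (2 - y)² - (1 - y) x (2 - x)² = (y - x) ((2 - s)² + p (3 - s))` with `s = x + y`,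
`p = x y`, and the second factor is nonnegative on `(0, 2)²`.
-/

open Set

noncomputable def omega2 (x : ℝ) : ℝ := (1 - x) ^ 2 / (1 - (1 - x) ^ 2)

lemma hasDerivAt_omega2 {x : ℝ} (h0 : x ≠ 0) (h2 : x ≠ 2) :
    HasDerivAt omega2 (-2 * (1 - x) / (x * (2 - x)) ^ 2) x := by
  have hden : 1 - (1 - x) ^ 2 ≠ 0 := by
    rw [show 1 - (1 - x) ^ 2 = x * (2 - x) by ring]
    exact mul_ne_zero h0 (sub_ne_zero.2 (Ne.symm h2))
  have hnum : HasDerivAt (fun y : ℝ => (1 - y) ^ 2) (-(2 * (1 - x))) x := by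
    simpa using ((hasDerivAt_id x).const_sub 1).fun_pow 2
  refine (hnum.fun_div (hnum.const_sub 1) hden).congr_deriv ?_
  rw [show 1 - (1 - x) ^ 2 = x * (2 - x) by ring]
  ring

lemma mul_deriv_omega2 {x : ℝ} (h0 : x ≠ 0) (h2 : x ≠ 2) :
    x * deriv omega2 x = -2 * ((1 - x) / (x * (2 - x) ^ 2)) := by
  have h2' : 2 - x ≠ 0 := sub_ne_zero.2 (Ne.symm h2)
  rw [(hasDerivAt_omega2 h0 h2).deriv]
  field_simp

lemma antitoneOn_one_sub_div_mul_two_sub_sq :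
    AntitoneOn (fun x : ℝ => (1 - x) / (x * (2 - x) ^ 2)) (Ioo 0 2) := by
  rintro x ⟨hx0, hx2⟩ y ⟨hy0, hy2⟩ hxy
  dsimp only
  rw [div_le_div_iff₀ (by positivity) (by positivity)]
  have hQ : 0 ≤ (2 - (x + y)) ^ 2 + x * y * (3 - (x + y)) := by
    nlinarith [mul_pos hx0 hy0, mul_pos (sub_pos.2 hx2) (sub_pos.2 hy2), sq_nonneg (x - y)]
  have key : (1 - x) * (y * (2 - y) ^ 2) - (1 - y) * (x * (2 - x) ^ 2)
      = (y - x) * ((2 - (x + y)) ^ 2 + x * y * (3 - (x + y))) := by ring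
  nlinarith [mul_nonneg (sub_nonneg.2 hxy) hQ]

lemma monotoneOn_mul_deriv_omega2 : MonotoneOn (fun x => x * deriv omega2 x) (Ioo 0 2) := by
  intro x hx y hy hxy
  dsimp only
  rw [mul_deriv_omega2 hx.1.ne' hx.2.ne, mul_deriv_omega2 hy.1.ne' hy.2.ne]
  linarith [antitoneOn_one_sub_div_mul_two_sub_sq hx hy hxy]

/-- For `ω₂(x) = (1-x)²/(1-(1-x)²)`, the function `x·ω₂'(x)` is increasing on `(0,1]`. -/
theorem stmt6 :
    MonotoneOn (fun x => x * deriv (fun y => (1 - y) ^ 2 / (1 - (1 - y) ^ 2)) x)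
      (Set.Ioc (0:ℝ) 1) :=
  monotoneOn_mul_deriv_omega2.mono fun _ hx => ⟨hx.1, hx.2.trans_lt one_lt_two⟩
end

section
/- For ω₂(x) = (1 - x³)/√x on (0,1], the function x·ω₂'(x) is neither increasing nor decreasing on (0,1]. -/
lemma myDeriv_eq (x : ℝ) (hx : 0 < x) :
    deriv (fun y => (1 - y ^ 3) / Real.sqrt y) x
      = ((-(3 * x ^ 2)) * Real.sqrt x - (1 - x ^ 3) * (1 / (2 * Real.sqrt x))) /
          (Real.sqrt x) ^ 2 := by
  have hs : Real.sqrt x ≠ 0 := ne_of_gt (Real.sqrt_pos.2 hx)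
  have h1 : HasDerivAt (fun y : ℝ => 1 - y ^ 3) (-(3 * x ^ 2)) x := by
    simpa using ((hasDerivAt_pow 3 x).const_sub 1)
  have h2 : HasDerivAt Real.sqrt (1 / (2 * Real.sqrt x)) x :=
    Real.hasDerivAt_sqrt (ne_of_gt hx)
  exact (h1.div h2 hs).deriv

/-- For `ω₂(x) = (1-x³)/√x`, the function `x·ω₂'(x)` is neither increasing nor
decreasing on `(0,1]`. -/
theorem stmt7 :
    ¬ MonotoneOn (fun x => x * deriv (fun y => (1 - y ^ 3) / Real.sqrt y) x)
        (Set.Ioc (0:ℝ) 1) ∧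
    ¬ AntitoneOn (fun x => x * deriv (fun y => (1 - y ^ 3) / Real.sqrt y) x)
        (Set.Ioc (0:ℝ) 1) := by
  have s16 : Real.sqrt (1/16 : ℝ) = 1/4 := by
    rw [show (1/16:ℝ) = (1/4)^2 by norm_num, Real.sqrt_sq (by norm_num)]
  have s4 : Real.sqrt (1/4 : ℝ) = 1/2 := by
    rw [show (1/4:ℝ) = (1/2)^2 by norm_num, Real.sqrt_sq (by norm_num)]
  have s1 : Real.sqrt (1 : ℝ) = 1 := Real.sqrt_one
  have v16 : (1/16:ℝ) * deriv (fun y => (1 - y ^ 3) / Real.sqrt y) (1/16)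
      = -4101/2048 := by
    rw [myDeriv_eq _ (by norm_num), s16]; norm_num
  have v4 : (1/4:ℝ) * deriv (fun y => (1 - y ^ 3) / Real.sqrt y) (1/4)
      = -69/64 := by
    rw [myDeriv_eq _ (by norm_num), s4]; norm_num
  have v1 : (1:ℝ) * deriv (fun y => (1 - y ^ 3) / Real.sqrt y) 1
      = -3 := by
    rw [myDeriv_eq _ (by norm_num), s1]; norm_num
  constructor
  · intro h
    have := h (a := 1/4) (by constructor <;> norm_num)
      (b := 1) (by constructor <;> norm_num) (by norm_num)
    simp only [v4, v1] at this; norm_num at this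
  · intro h
    have := h (a := 1/16) (by constructor <;> norm_num)
      (b := 1/4) (by constructor <;> norm_num) (by norm_num)
    simp only [v16, v4] at this; norm_num at this
end
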